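/- arXiv:0907.4241 — 5 statements merged into one kernel-verified Lean document; each statement's English description precedes it below -/
import Mathlib

section
/- Let S be a finitely generated, cancellative, reduced commutative monoid minimally generated by A = {a_1,...,a_r}, and let φ_A : ℕ^r → S be the factorization map. If a ∈ S is not a Betti element (i.e., φ_A^{-1}(a) has a single R-class) but a has at least two factorizations, then there exists a Betti element a' ∈ S with a' ≺_S a (i.e., a - a' ∈ S and a' ≠ a). -/
open Finset

variable {M : Type*} [AddCommMonoid M] {r : ℕ}

/-- The factorization homomorphism associated to the generating tuple `A`. -/
def phi (A : Fin r → M) (u : Fin r → ℕ) : M := ∑ i, u i • A i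

/-- One step of the relation `R`: two factorizations of `a` with nonzero dot product. -/
def step (A : Fin r → M) (a : M) (u v : Fin r → ℕ) : Prop :=
  phi A u = a ∧ phi A v = a ∧ (∑ i, u i * v i) ≠ 0

/-- The relation `R` on the fiber of `a`: connected by a chain of factorizations with
consecutive nonzero dot products. -/
def Rrel (A : Fin r → M) (a : M) : (Fin r → ℕ) → (Fin r → ℕ) → Prop :=
  Relation.ReflTransGen (step A a)

/-- `a` is a Betti element: its fiber has more than one `R`-class. -/
def IsBetti (A : Fin r → M) (a : M) : Prop :=
  ∃ u v : Fin r → ℕ, phi A u = a ∧ phi A v = a ∧ ¬ Rrel A a u v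

/-- `a` is Betti-minimal: a Betti element minimal with respect to `b ≺ a ↔ a - b ∈ S`. -/
def BettiMinimal (A : Fin r → M) (a : M) : Prop :=
  IsBetti A a ∧ ∀ b : M, IsBetti A b → (∃ c : M, a = b + c) → b = a

/-- `a` has a unique presentation: exactly two factorizations, with disjoint support. -/
def HasUniquePres (A : Fin r → M) (a : M) : Prop :=
  ∃ u v : Fin r → ℕ, u ≠ v ∧ {w : Fin r → ℕ | phi A w = a} = {u, v} ∧
    (∑ i, u i * v i) = 0

/-- The monoid generated by `A` is uniquely presented: every Betti element has exactly two
factorizations, with disjoint support. -/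
def UniquelyPresented (A : Fin r → M) : Prop :=
  ∀ a : M, IsBetti A a → HasUniquePres A a

/-! Induct on a factorization `u` of `a`. If `a` is not Betti, two distinct factorizations
of `a` are `R`-related, so `u` shares an atom `a_i` with some other factorization `w` of `a`.
Cancelling `a_i` gives two distinct factorizations of `a - a_i`, strictly smaller than `u`,
and a Betti element below `a - a_i` lies below `a`. -/

lemma phi_add (A : Fin r → M) (u v : Fin r → ℕ) :
    phi A (u + v) = phi A u + phi A v := by
  simp [phi, add_smul, Finset.sum_add_distrib]

lemma phi_single (A : Fin r → M) (i : Fin r) :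
    phi A (Pi.single i 1) = A i := by
  simp [phi, Pi.single_apply]

lemma exists_eq_add_single {u : Fin r → ℕ} {i : Fin r} (hi : u i ≠ 0) :
    ∃ u', u = u' + (Pi.single i 1 : Fin r → ℕ) :=
  ⟨u - Pi.single i 1, by
    ext j
    rcases eq_or_ne j i with rfl | hji
    · simp only [Pi.add_apply, Pi.sub_apply, Pi.single_eq_same]; omega
    · simp [hji]⟩

lemma Rrel.exists_step_ne {A : Fin r → M} {a : M} {u v : Fin r → ℕ}
    (h : Rrel A a u v) (hne : u ≠ v) : ∃ w, step A a u w ∧ u ≠ w := by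
  induction h with
  | refl => exact absurd rfl hne
  | @tail b c _ hbc ih =>
    rcases eq_or_ne u b with rfl | hub
    · exact ⟨c, hbc, hne⟩
    · exact ih hub

lemma exists_isBetti_add_of_phi_eq [IsRightCancelAdd M] (A : Fin r → M)
    (u : Fin r → ℕ) {v : Fin r → ℕ} (huv : u ≠ v) (h : phi A u = phi A v) :
    ∃ b : M, IsBetti A b ∧ ∃ c : M, phi A u = b + c := by
  induction u using WellFoundedLT.induction generalizing v with
  | _ u ih =>
  by_cases hb : IsBetti A (phi A u)
  · exact ⟨_, hb, 0, (add_zero _).symm⟩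
  have hR : Rrel A (phi A u) u v := by
    by_contra hR
    exact hb ⟨u, v, rfl, h.symm, hR⟩
  obtain ⟨w, ⟨-, hw, hdot⟩, huw⟩ := hR.exists_step_ne huv
  obtain ⟨i, -, hi⟩ := Finset.exists_ne_zero_of_sum_ne_zero hdot
  obtain ⟨hui, hwi⟩ := Nat.mul_ne_zero_iff.mp hi
  obtain ⟨u', rfl⟩ := exists_eq_add_single hui
  obtain ⟨w', rfl⟩ := exists_eq_add_single hwi
  have hlt : u' < u' + Pi.single i 1 := lt_add_of_pos_right u' (Pi.single_pos.mpr one_pos)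
  have hne : u' ≠ w' := fun h' => huw (by rw [h'])
  have hphi : phi A u' = phi A w' := by
    simp only [phi_add, phi_single] at hw
    exact add_right_cancel hw.symm
  obtain ⟨b, hb, c, hc⟩ := ih u' hlt hne hphi
  exact ⟨b, hb, c + A i, by rw [phi_add, phi_single, hc, add_assoc]⟩

theorem stmt0_general {M : Type*} [AddCancelCommMonoid M] {r : ℕ} (A : Fin r → M)
    (a : M) (hnb : ¬ IsBetti A a)
    (u v : Fin r → ℕ) (hu : phi A u = a) (hv : phi A v = a) (huv : u ≠ v) :
    ∃ a' : M, IsBetti A a' ∧ a' ≠ a ∧ ∃ c : M, a = a' + c := by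
  subst hu
  obtain ⟨a', hb', hc⟩ := exists_isBetti_add_of_phi_eq A u huv hv.symm
  exact ⟨a', hb', fun h => hnb (h ▸ hb'), hc⟩

/-- If `a` is not a Betti element but has at least two factorizations, then there is a
Betti element `a'` with `a' ≺_S a`, i.e. `a' ≠ a` and `a - a' ∈ S`. -/
theorem stmt0 {M : Type*} [AddCancelCommMonoid M] {r : ℕ} (A : Fin r → M)
    (hred : ∀ x y : M, x + y = 0 → x = 0)
    (hgen : ∀ s : M, ∃ u : Fin r → ℕ, phi A u = s)
    (hmin : ∀ i : Fin r, ¬ ∃ u : Fin r → ℕ, u i = 0 ∧ phi A u = A i)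
    (a : M) (hnb : ¬ IsBetti A a)
    (u v : Fin r → ℕ) (hu : phi A u = a) (hv : phi A v = a) (huv : u ≠ v) :
    ∃ a' : M, IsBetti A a' ∧ a' ≠ a ∧ ∃ c : M, a = a' + c :=
  stmt0_general A a hnb u v hu hv huv
end

section
/- Let S be a finitely generated, cancellative, reduced commutative monoid minimally generated by A. An element a ∈ S is a minimal Betti element (minimal among Betti elements with respect to ≺_S) if and only if φ_A^{-1}(a) has more than one R-class and every R-class of φ_A^{-1}(a) is a singleton. -/
open Finset

variable {M : Type*} [AddCommMonoid M] {r : ℕ}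

/-!
If every `R`-class of `a` is a singleton and `a = b + φ(w)` with `w ≠ 0`, then two factorizations
`u`, `v` of `b` give factorizations `u + w`, `v + w` of `a` with a common support, hence
`R`-related, hence equal; so `b` is not Betti unless `b = a`.

Conversely, let `a` be Betti-minimal and `x ≠ y` a step in its fiber. Strip the common part
`w = x ⊓ y ≠ 0`: then `b = φ(x - w)` lies strictly below `a`, so it is not Betti, and the chain
from `x - w` to `y - w` in the fiber of `b` contains a nontrivial step `s, t`. The step
`s + w, t + w` of `a` has a strictly larger common part than `x, y`. This cannot go on forever,
since by cancellativity and reducedness the fiber of `a` is an antichain of `ℕ^r`, hence finite.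
-/

theorem Relation.ReflTransGen.eq_of_forall_rel_eq {α : Type*} {rel : α → α → Prop} {u v : α}
    (h : Relation.ReflTransGen rel u v) (hrel : ∀ x y, rel x y → x = y) : u = v := by
  induction h with
  | refl => rfl
  | tail _ hbc ih => exact ih.trans (hrel _ _ hbc)

lemma sum_mul_ne_zero_iff_inf_ne_zero {ι : Type*} [Fintype ι] {u v : ι → ℕ} :
    (∑ i, u i * v i) ≠ 0 ↔ u ⊓ v ≠ 0 := by
  simp [sum_eq_zero_iff, funext_iff]

lemma inf_add_add_right {ι : Type*} (s t w : ι → ℕ) : (s + w) ⊓ (t + w) = s ⊓ t + w := by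
  ext i
  exact min_add_add_right (s i) (t i) (w i)

@[simp]
lemma phi_zero (A : Fin r → M) : phi A 0 = 0 := by
  simp [phi]

lemma step_add_of_ne_zero {A : Fin r → M} {b : M} {u v w : Fin r → ℕ}
    (hu : phi A u = b) (hv : phi A v = b) (hw : w ≠ 0) :
    step A (b + phi A w) (u + w) (v + w) := by
  refine ⟨by rw [phi_add, hu], by rw [phi_add, hv], ?_⟩
  rw [sum_mul_ne_zero_iff_inf_ne_zero, inf_add_add_right]
  exact fun h => hw (le_antisymm (h ▸ le_add_self) bot_le)

lemma eq_zero_of_phi_eq_zero [Subsingleton (AddUnits M)] {A : Fin r → M}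
    (hA : ∀ i, A i ≠ 0) {u : Fin r → ℕ} (h : phi A u = 0) : u = 0 := by
  funext i
  have hi : u i • A i = 0 := sum_eq_zero_iff.mp h i (mem_univ i)
  cases hui : u i with
  | zero => rfl
  | succ n => rw [hui, succ_nsmul] at hi; exact absurd (add_eq_zero.mp hi).2 (hA i)

lemma BettiMinimal.of_forall_rrel_eq (A : Fin r → M) (hgen : ∀ s : M, ∃ u, phi A u = s)
    {a : M} (hB : IsBetti A a)
    (hR : ∀ u v, phi A u = a → phi A v = a → Rrel A a u v → u = v) : BettiMinimal A a := by
  refine ⟨hB, fun b ⟨u, v, hu, hv, huv⟩ ⟨c, hc⟩ => ?_⟩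
  obtain ⟨w, rfl⟩ := hgen c
  obtain rfl | hw := eq_or_ne w 0
  · rw [hc, phi_zero, add_zero]
  · have hstep : step A a (u + w) (v + w) := hc ▸ step_add_of_ne_zero hu hv hw
    have : u = v := add_right_cancel (hR _ _ hstep.1 hstep.2.1 (.single hstep))
    exact absurd (this ▸ .refl) huv

section Cancel

variable {M : Type*} [AddCancelCommMonoid M] [Subsingleton (AddUnits M)] {A : Fin r → M}

lemma isAntichain_fiber (hA : ∀ i, A i ≠ 0) (a : M) :
    IsAntichain (· ≤ ·) {u : Fin r → ℕ | phi A u = a} := by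
  intro u hu v hv hne huv
  have hsplit : u + (v - u) = v := add_tsub_cancel_of_le huv
  have : phi A u + phi A (v - u) = phi A u + 0 := by
    rw [← phi_add, hsplit, add_zero, hu, hv]
  have hvu : v - u = 0 := eq_zero_of_phi_eq_zero hA (add_left_cancel this)
  exact hne (by rw [← hsplit, hvu, add_zero])

lemma finite_fiber (hA : ∀ i, A i ≠ 0) (a : M) : {u : Fin r → ℕ | phi A u = a}.Finite :=
  WellQuasiOrderedLE.finite_of_isAntichain (isAntichain_fiber hA a)

lemma BettiMinimal.not_isBetti_of_eq_add (hA : ∀ i, A i ≠ 0) {a b : M} (ha : BettiMinimal A a)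
    {w : Fin r → ℕ} (hw : w ≠ 0) (hab : a = b + phi A w) : ¬ IsBetti A b := by
  intro hb
  obtain rfl := ha.2 b hb ⟨_, hab⟩
  exact hw (eq_zero_of_phi_eq_zero hA (add_left_cancel (hab.symm.trans (add_zero b).symm)))

lemma BettiMinimal.exists_step_inf_gt (hA : ∀ i, A i ≠ 0) {a : M} (ha : BettiMinimal A a)
    {x y : Fin r → ℕ} (hxy : step A a x y) (hne : x ≠ y) :
    ∃ s t, step A a s t ∧ s ≠ t ∧ ∑ i, (x ⊓ y) i < ∑ i, (s ⊓ t) i := by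
  set w := x ⊓ y
  have hw : w ≠ 0 := sum_mul_ne_zero_iff_inf_ne_zero.mp hxy.2.2
  have hx : x - w + w = x := tsub_add_cancel_of_le inf_le_left
  have hy : y - w + w = y := tsub_add_cancel_of_le inf_le_right
  set b := phi A (x - w)
  have hab : a = b + phi A w := by rw [← phi_add, hx, hxy.1]
  have hyb : phi A (y - w) = b :=
    add_right_cancel (b := phi A w) (by rw [← phi_add, hy, hxy.2.1, hab])
  have hR : Rrel A b (x - w) (y - w) := by
    by_contra h
    exact ha.not_isBetti_of_eq_add hA hw hab ⟨_, _, rfl, hyb, h⟩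
  obtain ⟨s, t, hst, hst_ne⟩ : ∃ s t, step A b s t ∧ s ≠ t := by
    by_contra! h
    exact hne (by rw [← hx, ← hy, hR.eq_of_forall_rel_eq h])
  refine ⟨s + w, t + w, hab ▸ step_add_of_ne_zero hst.1 hst.2.1 hw,
    fun h => hst_ne (add_right_cancel h), ?_⟩
  have hpos : 0 < ∑ i, (s ⊓ t) i := by
    refine Nat.pos_of_ne_zero fun h0 => sum_mul_ne_zero_iff_inf_ne_zero.mp hst.2.2 ?_
    exact funext fun i => sum_eq_zero_iff.mp h0 i (mem_univ i)
  rw [inf_add_add_right]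
  simp only [Pi.add_apply, sum_add_distrib]
  omega

lemma BettiMinimal.eq_of_step (hA : ∀ i, A i ≠ 0) {a : M} (ha : BettiMinimal A a)
    {x y : Fin r → ℕ} (hxy : step A a x y) : x = y := by
  by_contra hne
  let steps : Set ((Fin r → ℕ) × (Fin r → ℕ)) := {p | step A a p.1 p.2 ∧ p.1 ≠ p.2}
  have hfin : steps.Finite :=
    ((finite_fiber hA a).prod (finite_fiber hA a)).subset fun p hp => ⟨hp.1.1, hp.1.2.1⟩
  obtain ⟨⟨x₀, y₀⟩, ⟨hxy₀, hne₀⟩, hmax⟩ :=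
    hfin.exists_maximalFor (fun p => ∑ i, (p.1 ⊓ p.2) i) steps ⟨(x, y), hxy, hne⟩
  obtain ⟨s, t, hst, hst_ne, hlt⟩ := ha.exists_step_inf_gt hA hxy₀ hne₀
  exact hlt.not_ge (hmax (j := (s, t)) ⟨hst, hst_ne⟩ hlt.le)

end Cancel

/-- `a` is Betti-minimal iff its fiber has more than one `R`-class and every `R`-class
is a singleton. -/
theorem stmt1 {M : Type*} [AddCancelCommMonoid M] {r : ℕ} (A : Fin r → M)
    (hred : ∀ x y : M, x + y = 0 → x = 0)
    (hgen : ∀ s : M, ∃ u : Fin r → ℕ, phi A u = s)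
    (hmin : ∀ i : Fin r, ¬ ∃ u : Fin r → ℕ, u i = 0 ∧ phi A u = A i)
    (a : M) :
    BettiMinimal A a ↔
      (IsBetti A a ∧
        ∀ u v : Fin r → ℕ, phi A u = a → phi A v = a → Rrel A a u v → u = v) := by
  have : Subsingleton (AddUnits M) := Subsingleton.addUnits_of_isAddUnit fun x hx =>
    hred x _ hx.exists_neg.choose_spec
  have hA : ∀ i, A i ≠ 0 := fun i h0 => hmin i ⟨0, rfl, by rw [phi_zero, h0]⟩
  refine ⟨fun ha => ⟨ha.1, fun u v _ _ huv => ?_⟩, fun ⟨hB, hR⟩ => ?_⟩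
  · exact huv.eq_of_forall_rel_eq fun x y => ha.eq_of_step hA
  · exact BettiMinimal.of_forall_rrel_eq A hgen hB hR
end

section
/- Let S ⊆ ℤ^n be an affine semigroup minimally generated by two elements a_1, a_2. If the group generated by S has rank one, then there exist positive integers u, v with u a_1 = v a_2, S has exactly one Betti element a = u a_1 = v a_2, the fiber φ_A^{-1}(a) equals {(u,0),(0,v)}, and S is uniquely presented. -/
open Finset

variable {M : Type*} [AddCommMonoid M] {r : ℕ}

lemma aux_fiber (P Q g u v : ℕ) (hPv : P = g * v) (hQu : Q = g * u)
    (hg : 0 < g) (hco : Nat.Coprime u v) (hu : 0 < u) (hv : 0 < v)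
    {x y : ℕ} (h : x * P + y * Q = u * P) :
    (x = u ∧ y = 0) ∨ (x = 0 ∧ y = v) := by
  have h2 : g * (x * v + y * u) = g * (u * v) := by
    calc g * (x * v + y * u) = x * (g * v) + y * (g * u) := by ring
    _ = u * (g * v) := by rw [← hPv, ← hQu]; exact h
    _ = g * (u * v) := by ring
  have h3 : x * v + y * u = u * v := Nat.eq_of_mul_eq_mul_left hg h2
  have hxv : x * v = u * v - y * u := Nat.eq_sub_of_add_eq h3
  have hd : u ∣ x * v := by
    rw [hxv]; exact Nat.dvd_sub (dvd_mul_right u v) (dvd_mul_left u y)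
  have hdx : u ∣ x := Nat.Coprime.dvd_of_dvd_mul_right hco hd
  have hxle : x ≤ u := by
    have : x * v ≤ u * v := by
      have : y * u ≤ u * v := by
        calc y * u ≤ x * v + y * u := Nat.le_add_left _ _
        _ = u * v := h3
      exact le_of_eq_of_le hxv (Nat.sub_le _ _)
    exact Nat.le_of_mul_le_mul_right this hv
  rcases Nat.eq_zero_or_pos x with hx0 | hxpos
  · right
    refine ⟨hx0, ?_⟩
    subst hx0
    simp only [Nat.zero_mul, Nat.zero_add] at h3
    have : u * y = u * v := by rw [Nat.mul_comm u y]; exact h3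
    exact Nat.eq_of_mul_eq_mul_left hu this
  · left
    have hxu : x = u := le_antisymm hxle (Nat.le_of_dvd hxpos hdx)
    refine ⟨hxu, ?_⟩
    rw [hxu] at h3
    have hy : y * u = 0 := Nat.add_left_cancel (h3.trans (Nat.add_zero (u * v)).symm)
    rcases Nat.mul_eq_zero.mp hy with h | h
    · exact h
    · omega

/-- An affine semigroup `S ⊆ ℤⁿ` minimally generated by two elements, whose generated group
has rank one, has positive integers `u, v` with `u a₁ = v a₂`, exactly one Betti element
`u a₁ = v a₂`, whose fiber is `{(u,0),(0,v)}`, and `S` is uniquely presented. -/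
theorem stmt4 {n : ℕ} (a₁ a₂ : Fin n → ℤ)
    -- reduced (free of units)
    (hred : ∀ x ∈ AddSubmonoid.closure ({a₁, a₂} : Set (Fin n → ℤ)),
      -x ∈ AddSubmonoid.closure ({a₁, a₂} : Set (Fin n → ℤ)) → x = 0)
    -- {a₁, a₂} is a minimal generating set
    (hmin₁ : a₁ ∉ AddSubmonoid.closure ({a₂} : Set (Fin n → ℤ)))
    (hmin₂ : a₂ ∉ AddSubmonoid.closure ({a₁} : Set (Fin n → ℤ)))
    -- the group generated by S has rank one
    (hrank : ∃ d : Fin n → ℤ, d ≠ 0 ∧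
      AddSubgroup.closure ({a₁, a₂} : Set (Fin n → ℤ)) = AddSubgroup.zmultiples d) :
    ∃ u v : ℕ, 0 < u ∧ 0 < v ∧ u • a₁ = v • a₂ ∧
      {s : Fin n → ℤ | IsBetti ![a₁, a₂] s} = {u • a₁} ∧
      {w : Fin 2 → ℕ | phi ![a₁, a₂] w = u • a₁} = {![u, 0], ![0, v]} ∧
      UniquelyPresented ![a₁, a₂] := by
  classical
  obtain ⟨d, hd, hcl⟩ := hrank
  have ha₁S : a₁ ∈ AddSubmonoid.closure ({a₁, a₂} : Set (Fin n → ℤ)) :=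
    AddSubmonoid.subset_closure (by simp)
  have ha₂S : a₂ ∈ AddSubmonoid.closure ({a₁, a₂} : Set (Fin n → ℤ)) :=
    AddSubmonoid.subset_closure (by simp)
  obtain ⟨p, hp⟩ : ∃ p : ℤ, p • d = a₁ := by
    have h : a₁ ∈ AddSubgroup.closure ({a₁, a₂} : Set (Fin n → ℤ)) :=
      AddSubgroup.subset_closure (by simp)
    rw [hcl] at h
    exact AddSubgroup.mem_zmultiples_iff.mp h
  obtain ⟨q, hq⟩ : ∃ q : ℤ, q • d = a₂ := by
    have h : a₂ ∈ AddSubgroup.closure ({a₁, a₂} : Set (Fin n → ℤ)) :=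
      AddSubgroup.subset_closure (by simp)
    rw [hcl] at h
    exact AddSubgroup.mem_zmultiples_iff.mp h
  have ha₁0 : a₁ ≠ 0 := fun h => hmin₁ (h ▸ zero_mem _)
  have ha₂0 : a₂ ≠ 0 := fun h => hmin₂ (h ▸ zero_mem _)
  have hp0 : p ≠ 0 := fun h => ha₁0 (by rw [← hp, h, zero_smul])
  have hq0 : q ≠ 0 := fun h => ha₂0 (by rw [← hq, h, zero_smul])
  -- opposite signs are impossible
  have key : ∀ (b c : Fin n → ℤ), b ∈ AddSubmonoid.closure ({a₁, a₂} : Set (Fin n → ℤ)) →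
      c ∈ AddSubmonoid.closure ({a₁, a₂} : Set (Fin n → ℤ)) →
      ∀ s t : ℤ, s • d = b → t • d = c → 0 < s → t < 0 → False := by
    intro b c hb hc s t hs ht hs0 ht0
    have hx : t.natAbs • b ∈ AddSubmonoid.closure ({a₁, a₂} : Set (Fin n → ℤ)) :=
      AddSubmonoid.nsmul_mem _ hb _
    have hy : s.natAbs • c ∈ AddSubmonoid.closure ({a₁, a₂} : Set (Fin n → ℤ)) :=
      AddSubmonoid.nsmul_mem _ hc _
    have h1 : (s.natAbs : ℤ) = s := by omega
    have h2 : (t.natAbs : ℤ) = -t := by omega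
    have hsum : t.natAbs • b + s.natAbs • c = 0 := by
      rw [← hs, ← ht, ← Nat.cast_smul_eq_nsmul ℤ, ← Nat.cast_smul_eq_nsmul ℤ,
        smul_smul, smul_smul, ← add_smul]
      have : (t.natAbs : ℤ) * s + (s.natAbs : ℤ) * t = 0 := by rw [h1, h2]; ring
      rw [this, zero_smul]
    have hneg : -(t.natAbs • b) = s.natAbs • c := neg_eq_of_add_eq_zero_right hsum
    have hz := hred _ hx (by rw [hneg]; exact hy)
    rw [← hs, ← Nat.cast_smul_eq_nsmul ℤ, smul_smul] at hz
    rcases smul_eq_zero.mp hz with h | h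
    · rw [h2] at h; nlinarith
    · exact hd h
  suffices main : ∀ (e : Fin n → ℤ), e ≠ 0 → ∀ P Q : ℕ, 0 < P → 0 < Q → a₁ = P • e →
      a₂ = Q • e →
      (∃ u v : ℕ, 0 < u ∧ 0 < v ∧ u • a₁ = v • a₂ ∧
        {s : Fin n → ℤ | IsBetti ![a₁, a₂] s} = {u • a₁} ∧
        {w : Fin 2 → ℕ | phi ![a₁, a₂] w = u • a₁} = {![u, 0], ![0, v]} ∧
        UniquelyPresented ![a₁, a₂]) by
    rcases lt_or_gt_of_ne hp0 with hpneg | hppos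
    · have hqneg : q < 0 := by
        rcases lt_or_gt_of_ne hq0 with h | h
        · exact h
        · exact absurd (key a₂ a₁ ha₂S ha₁S q p hq hp h hpneg) id
      refine main (-d) (neg_ne_zero.mpr hd) (-p).toNat (-q).toNat (by omega) (by omega) ?_ ?_
      · rw [← Nat.cast_smul_eq_nsmul ℤ]
        have h1 : (((-p).toNat : ℤ)) = -p := by omega
        rw [h1, neg_smul_neg]
        exact hp.symm
      · rw [← Nat.cast_smul_eq_nsmul ℤ]
        have h1 : (((-q).toNat : ℤ)) = -q := by omega
        rw [h1, neg_smul_neg]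
        exact hq.symm
    · have hqpos : 0 < q := by
        rcases lt_or_gt_of_ne hq0 with h | h
        · exact absurd (key a₁ a₂ ha₁S ha₂S p q hp hq hppos h) id
        · exact h
      refine main d hd p.toNat q.toNat (by omega) (by omega) ?_ ?_
      · rw [← Nat.cast_smul_eq_nsmul ℤ]
        have h1 : ((p.toNat : ℤ)) = p := by omega
        rw [h1]; exact hp.symm
      · rw [← Nat.cast_smul_eq_nsmul ℤ]
        have h1 : ((q.toNat : ℤ)) = q := by omega
        rw [h1]; exact hq.symm
  intro e he P Q hP hQ hA1 hA2
  have hinj : ∀ k l : ℕ, k • e = l • e → k = l := by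
    intro k l h
    have h' : (k : ℤ) • e = (l : ℤ) • e := by
      rw [Nat.cast_smul_eq_nsmul, Nat.cast_smul_eq_nsmul]; exact h
    exact_mod_cast smul_left_injective ℤ he h'
  have hphi : ∀ w : Fin 2 → ℕ, phi ![a₁, a₂] w = (w 0 * P + w 1 * Q) • e := by
    intro w
    simp only [phi, Fin.sum_univ_two, Matrix.cons_val_zero, Matrix.cons_val_one,
      Matrix.head_cons, hA1, hA2, smul_smul, add_smul]
  have hphi' : ∀ x y : ℕ, phi ![a₁, a₂] ![x, y] = (x * P + y * Q) • e := by
    intro x y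
    rw [hphi]
    simp
  have hndvd1 : ¬ (Q ∣ P) := by
    rintro ⟨k, hk⟩
    apply hmin₁
    rw [AddSubmonoid.mem_closure_singleton]
    refine ⟨k, ?_⟩
    rw [hA2, hA1, smul_smul, hk, Nat.mul_comm]
  have hndvd2 : ¬ (P ∣ Q) := by
    rintro ⟨k, hk⟩
    apply hmin₂
    rw [AddSubmonoid.mem_closure_singleton]
    refine ⟨k, ?_⟩
    rw [hA2, hA1, smul_smul, hk, Nat.mul_comm]
  obtain ⟨v, hPv⟩ : Nat.gcd P Q ∣ P := Nat.gcd_dvd_left P Q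
  obtain ⟨u, hQu⟩ : Nat.gcd P Q ∣ Q := Nat.gcd_dvd_right P Q
  set g := Nat.gcd P Q with hg0
  have hg : 0 < g := Nat.gcd_pos_of_pos_left Q hP
  have hu : 0 < u := by
    rcases Nat.eq_zero_or_pos u with h | h
    · rw [h, Nat.mul_zero] at hQu; omega
    · exact h
  have hv : 0 < v := by
    rcases Nat.eq_zero_or_pos v with h | h
    · rw [h, Nat.mul_zero] at hPv; omega
    · exact h
  have hco : Nat.Coprime u v := by
    have h1 : P / g = v := by rw [hPv]; exact Nat.mul_div_cancel_left v hg
    have h2 : Q / g = u := by rw [hQu]; exact Nat.mul_div_cancel_left u hg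
    have := Nat.coprime_div_gcd_div_gcd (m := P) (n := Q) hg
    rw [h1, h2] at this
    exact this.symm
  have hkey : u * P = v * Q := by rw [hPv, hQu]; ring
  have ha0 : u • a₁ = (u * P) • e := by rw [hA1, smul_smul]
  have hfib : ∀ w : Fin 2 → ℕ, phi ![a₁, a₂] w = (u * P) • e ↔
      (w = ![u, 0] ∨ w = ![0, v]) := by
    intro w
    constructor
    · intro h
      rw [hphi] at h
      have hm := hinj _ _ h
      rcases aux_fiber P Q g u v hPv hQu hg hco hu hv hm with ⟨h1, h2⟩ | ⟨h1, h2⟩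
      · left; funext i; fin_cases i <;> simp [h1, h2]
      · right; funext i; fin_cases i <;> simp [h1, h2]
    · rintro (rfl | rfl)
      · rw [hphi']; simp
      · rw [hphi']
        have : (0 : ℕ) * P + v * Q = u * P := by rw [← hkey]; ring
        rw [this]
  have hnrel : ¬ Rrel ![a₁, a₂] ((u * P) • e) ![u, 0] ![0, v] := by
    intro h
    have hreach : ∀ w, Rrel ![a₁, a₂] ((u * P) • e) ![u, 0] w → w = ![u, 0] := by
      intro w hw
      induction hw with
      | refl => rfl
      | tail hab hbc ih =>
        obtain ⟨hb, hc, hdot⟩ := hbc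
        rw [ih] at hdot
        rcases (hfib _).mp hc with rfl | rfl
        · rfl
        · exfalso
          apply hdot
          simp [Fin.sum_univ_two]
    have h0 := congrFun (hreach _ h) 0
    simp at h0
    omega
  have hstepsymm : ∀ (a : Fin n → ℤ) w w', step ![a₁, a₂] a w w' → step ![a₁, a₂] a w' w := by
    rintro a w w' ⟨h1, h2, h3⟩
    refine ⟨h2, h1, ?_⟩
    intro hc
    apply h3
    rw [Fin.sum_univ_two] at hc ⊢
    rw [Nat.mul_comm (w 0), Nat.mul_comm (w 1)]
    exact hc
  have hsymm : ∀ (a : Fin n → ℤ) w w', Rrel ![a₁, a₂] a w w' → Rrel ![a₁, a₂] a w' w := by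
    intro a w w' h
    induction h with
    | refl => exact Relation.ReflTransGen.refl
    | tail hab hbc ih => exact Relation.ReflTransGen.head (hstepsymm _ _ _ hbc) ih
  have hchain : ∀ m : ℕ, m ≠ u * P → ∀ k x y, x * P + (y + k * v) * Q = m →
      Rrel ![a₁, a₂] (m • e) ![x, y + k * v] ![x + k * u, y] := by
    intro m hm k
    induction k with
    | zero =>
      intro x y h
      simp only [Nat.zero_mul, Nat.add_zero]
      exact Relation.ReflTransGen.refl
    | succ k ih =>
      intro x y h
      have h2 : (x + u) * P + (y + k * v) * Q = m := by
        have e1 : (x + u) * P + (y + k * v) * Q = x * P + (y + (k + 1) * v) * Q := by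
          rw [Nat.add_mul x u, hkey]; ring
        exact e1.trans h
      have hstep1 : step ![a₁, a₂] (m • e) ![x, y + (k + 1) * v] ![x + u, y + k * v] := by
        refine ⟨?_, ?_, ?_⟩
        · rw [hphi', h]
        · rw [hphi', h2]
        · rw [Fin.sum_univ_two]
          simp only [Matrix.cons_val_zero, Matrix.cons_val_one, Matrix.head_cons]
          intro hc
          obtain ⟨hx0, hy0⟩ := Nat.add_eq_zero.mp hc
          have hx : x = 0 := by
            rcases Nat.mul_eq_zero.mp hx0 with h' | h'
            · exact h'
            · omega
          rcases Nat.mul_eq_zero.mp hy0 with hy | hy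
          · obtain ⟨hy1, hy2⟩ := Nat.add_eq_zero.mp hy
            rcases Nat.mul_eq_zero.mp hy2 with h' | h' <;> omega
          · obtain ⟨hy1, hy2⟩ := Nat.add_eq_zero.mp hy
            apply hm
            have hv1 : (k + 1) * v = v := by
              rw [Nat.add_mul, Nat.one_mul, hy2, Nat.zero_add]
            rw [← h, hx, hy1, hv1, Nat.zero_mul, Nat.zero_add, Nat.zero_add, ← hkey]
      refine Relation.ReflTransGen.head hstep1 ?_
      have hih := ih (x + u) y h2
      have heq : x + u + k * u = x + (k + 1) * u := by ring
      rwa [heq] at hih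
  have heta : ∀ w : Fin 2 → ℕ, w = ![w 0, w 1] := by
    intro w; funext i; fin_cases i <;> rfl
  have hhalf : ∀ m : ℕ, m ≠ u * P → ∀ w w' : Fin 2 → ℕ,
      w 0 * P + w 1 * Q = m → w' 0 * P + w' 1 * Q = m → w 0 ≤ w' 0 →
      Rrel ![a₁, a₂] (m • e) w w' := by
    intro m hm w w' h1 h2 hle
    obtain ⟨k, hk⟩ := Nat.le.dest hle
    have hyle : w' 1 ≤ w 1 := by
      by_contra hcon
      push_neg at hcon
      have t1 : w 0 * P ≤ w' 0 * P := Nat.mul_le_mul_right P hle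
      have t2 : w 1 * Q < w' 1 * Q := Nat.mul_lt_mul_of_lt_of_le hcon (le_refl Q) hQ
      linarith
    obtain ⟨l, hl⟩ := Nat.le.dest hyle
    have hkP : k * P = l * Q := by
      have e1 : w 0 * P + w' 1 * Q + l * Q = m := by rw [← h1, ← hl]; ring
      have e2 : w 0 * P + k * P + w' 1 * Q = m := by rw [← h2, ← hk]; ring
      linarith
    have hgkl : g * (k * v) = g * (l * u) := by
      calc g * (k * v) = k * (g * v) := by ring
      _ = k * P := by rw [← hPv]
      _ = l * Q := hkP
      _ = l * (g * u) := by rw [hQu]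
      _ = g * (l * u) := by ring
    have hkv : k * v = l * u := Nat.eq_of_mul_eq_mul_left hg hgkl
    have hdk : u ∣ k := Nat.Coprime.dvd_of_dvd_mul_right hco
      (by rw [hkv]; exact dvd_mul_left u l)
    obtain ⟨t, ht⟩ := hdk
    have hlv : l = t * v := by
      have : l * u = (t * v) * u := by rw [← hkv, ht]; ring
      exact Nat.eq_of_mul_eq_mul_right hu this
    have hw1 : w' 1 + t * v = w 1 := by rw [← hlv]; exact hl
    have hw0 : w 0 + t * u = w' 0 := by rw [show t * u = k by rw [ht]; ring]; exact hk
    have hc := hchain m hm t (w 0) (w' 1) (by rw [hw1]; exact h1)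
    have hc2 : Rrel ![a₁, a₂] (m • e) ![w 0, w 1] ![w' 0, w' 1] := by
      rw [← hw1, ← hw0]; exact hc
    rwa [← heta w, ← heta w'] at hc2
  have hconn : ∀ (a : Fin n → ℤ) w w', phi ![a₁, a₂] w = a → phi ![a₁, a₂] w' = a →
      a ≠ (u * P) • e → Rrel ![a₁, a₂] a w w' := by
    intro a w w' hw hw' ha
    set m := w 0 * P + w 1 * Q with hmdef
    have ham : a = m • e := by rw [← hw, hphi]
    have h1 : w 0 * P + w 1 * Q = m := rfl
    have h2 : w' 0 * P + w' 1 * Q = m := hinj _ _ (by rw [← hphi, hw']; exact ham)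
    have hmne : m ≠ u * P := fun hh => ha (by rw [ham, hh])
    rw [ham]
    rcases le_total (w 0) (w' 0) with h | h
    · exact hhalf m hmne w w' h1 h2 h
    · exact hsymm _ _ _ (hhalf m hmne w' w h2 h1 h)
  refine ⟨u, v, hu, hv, ?_, ?_, ?_, ?_⟩
  · rw [hA1, hA2, smul_smul, smul_smul, hkey]
  · ext s
    simp only [Set.mem_setOf_eq, Set.mem_singleton_iff]
    constructor
    · rintro ⟨w, w', hw, hw', hnr⟩
      by_contra hne
      refine hnr (hconn s w w' hw hw' ?_)
      rw [← ha0]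
      exact hne
    · rintro rfl
      refine ⟨![u, 0], ![0, v], ?_, ?_, ?_⟩
      · rw [ha0]; exact (hfib _).mpr (Or.inl rfl)
      · rw [ha0]; exact (hfib _).mpr (Or.inr rfl)
      · rw [ha0]; exact hnrel
  · ext w
    simp only [Set.mem_setOf_eq, Set.mem_insert_iff, Set.mem_singleton_iff]
    rw [ha0]
    exact hfib w
  · intro a ha
    obtain ⟨w, w', hw, hw', hnr⟩ := ha
    have haeq : a = (u * P) • e := by
      by_contra hne
      exact hnr (hconn a w w' hw hw' hne)
    refine ⟨![u, 0], ![0, v], ?_, ?_, ?_⟩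
    · intro hcontra
      have h0 := congrFun hcontra 0
      simp at h0
      omega
    · ext w''
      simp only [Set.mem_setOf_eq, Set.mem_insert_iff, Set.mem_singleton_iff]
      rw [haeq]
      exact hfib w''
    · rw [Fin.sum_univ_two]; simp
end

section
/- Let m_1, m_2 be relatively prime integers greater than one, and let a, b, c be nonnegative integers with a ≥ 2, b + c ≥ 2, and gcd(a, b m_1 + c m_2) = 1. Then S = ⟨a m_1, a m_2, b m_1 + c m_2⟩ is a symmetric numerical semigroup of embedding dimension three. -/
/-! Gluing: if `T ⊆ ℤ` is symmetric about `g` (`x ∈ T ↔ g - x ∉ T`) and `d ∈ T` is coprime to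
`a > 0`, then `S = aT + ℕd` is symmetric about `F = ag + (a - 1)d`. Indeed every integer is
`γd + at` with `0 ≤ γ < a`; coprimality shows that it lies in `S` iff `t ∈ T`, and `F - (γd + at)`
is `(a - 1 - γ)d + a(g - t)`. Gluing `ℕ` (symmetric about `-1`) with `a = m₂, d = m₁` gives
`⟨m₁, m₂⟩` with Frobenius number `m₁m₂ - m₁ - m₂`, and gluing once more gives `S`. Minimality of
the three generators is a divisibility argument. -/

theorem Int.exists_eq_mul_add_mul_of_isCoprime {d n : ℤ} (h : IsCoprime d n) (hn : 0 < n)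
    (x : ℤ) : ∃ γ t, 0 ≤ γ ∧ γ < n ∧ x = γ * d + n * t := by
  obtain ⟨u, v, huv⟩ := h
  refine ⟨x * u % n, x * v + x * u / n * d, Int.emod_nonneg _ hn.ne', Int.emod_lt_of_pos _ hn, ?_⟩
  rw [Int.emod_def]
  linear_combination (-x) * huv

namespace AddSubmonoid

/-- For `S ⊆ ℕ` this says that `S` is a symmetric numerical semigroup with Frobenius number `g`;
working in `ℤ` lets `ℕ` itself be symmetric about `-1`. -/
def IsSymmetric (S : AddSubmonoid ℤ) (g : ℤ) : Prop :=
  ∀ x, x ∈ S ↔ g - x ∉ S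

theorem IsSymmetric.notMem {S : AddSubmonoid ℤ} {g : ℤ} (h : S.IsSymmetric g) : g ∉ S := by
  simpa using (h 0).1 S.zero_mem

def glue (T : AddSubmonoid ℤ) (a d : ℤ) : AddSubmonoid ℤ :=
  T.map (AddMonoidHom.mulLeft a) ⊔ closure {d}

theorem glue_closure (s : Set ℤ) (a d : ℤ) :
    glue (closure s) a d = closure ((a * ·) '' s ∪ {d}) := by
  rw [glue, AddMonoidHom.map_mclosure, closure_union]
  rfl

theorem isSymmetric_closure_one : IsSymmetric (closure {1}) (-1) := by
  have hmem (x : ℤ) : x ∈ closure {1} ↔ 0 ≤ x := by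
    rw [mem_closure_singleton]
    exact ⟨fun ⟨n, hn⟩ => hn ▸ by simp, fun hx => ⟨x.toNat, by simp [hx]⟩⟩
  intro x
  rw [hmem, hmem]
  omega

section Glue

variable {T : AddSubmonoid ℤ} {a d : ℤ}

theorem mem_glue_iff (ha : 0 < a) (hd : d ∈ T) (hcop : IsCoprime a d) {γ t : ℤ} (hγ : 0 ≤ γ)
    (hγa : γ < a) : γ * d + a * t ∈ glue T a d ↔ t ∈ T := by
  refine ⟨fun hx => ?_, fun ht => mem_sup.2 ⟨a * t, ⟨t, ht, rfl⟩, γ * d, ?_, add_comm _ _⟩⟩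
  · obtain ⟨_, ⟨t', ht', rfl⟩, _, hz, hx⟩ := mem_sup.1 hx
    obtain ⟨n, rfl⟩ := mem_closure_singleton.1 hz
    simp only [AddMonoidHom.coe_mulLeft, nsmul_eq_mul] at hx
    obtain ⟨k, hk⟩ : a ∣ n - γ :=
      hcop.dvd_of_dvd_mul_right ⟨t - t', by linear_combination hx⟩
    have hk0 : 0 ≤ k := by nlinarith
    have htk : t = t' + k * d := by
      apply mul_left_cancel₀ ha.ne'
      linear_combination d * hk - hx
    rw [htk, ← Int.toNat_of_nonneg hk0, ← nsmul_eq_mul]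
    exact add_mem ht' (nsmul_mem hd _)
  · rw [mem_closure_singleton]
    exact ⟨γ.toNat, by simp [hγ]⟩

theorem IsSymmetric.glue {g : ℤ} (hT : IsSymmetric T g) (ha : 0 < a) (hd : d ∈ T)
    (hcop : IsCoprime a d) : IsSymmetric (glue T a d) (a * g + (a - 1) * d) := by
  intro x
  obtain ⟨γ, t, hγ, hγa, rfl⟩ := Int.exists_eq_mul_add_mul_of_isCoprime hcop.symm ha x
  have hdual : a * g + (a - 1) * d - (γ * d + a * t) = (a - 1 - γ) * d + a * (g - t) := by ring
  rw [hdual, mem_glue_iff ha hd hcop hγ hγa, mem_glue_iff ha hd hcop (by omega) (by omega)]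
  exact hT t

end Glue

theorem isSymmetric_closure_pair {m₁ m₂ : ℤ} (hm₁ : 0 ≤ m₁) (hm₂ : 0 < m₂)
    (hcop : IsCoprime m₁ m₂) : IsSymmetric (closure {m₁, m₂}) (m₁ * m₂ - m₁ - m₂) := by
  have h := isSymmetric_closure_one.glue hm₂ (mem_closure_singleton.2 ⟨m₁.toNat, by simp [hm₁]⟩)
    hcop.symm
  rw [glue_closure, Set.image_singleton, mul_one, Set.singleton_union, Set.pair_comm] at h
  convert h using 1
  ring

theorem isSymmetric_closure_triple {m₁ m₂ a d : ℤ} (hm₁ : 0 ≤ m₁) (hm₂ : 0 < m₂)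
    (hcopm : IsCoprime m₁ m₂) (ha : 0 < a) (hcop : IsCoprime a d) (hd : d ∈ closure {m₁, m₂}) :
    IsSymmetric (closure {a * m₁, a * m₂, d}) (a * (m₁ * m₂ - m₁ - m₂) + (a - 1) * d) := by
  have h := (isSymmetric_closure_pair hm₁ hm₂ hcopm).glue ha hd hcop
  rwa [glue_closure, Set.image_pair, Set.insert_union, Set.singleton_union] at h

section Nat

variable {M : AddSubmonoid ℕ} {g : ℤ}

theorem natCast_mem_map_iff {x : ℕ} : (x : ℤ) ∈ M.map (Nat.castAddMonoidHom ℤ) ↔ x ∈ M :=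
  mem_map_iff_mem Nat.cast_injective

theorem IsSymmetric.le_of_notMem (h : (M.map (Nat.castAddMonoidHom ℤ)).IsSymmetric g) {x : ℕ}
    (hx : x ∉ M) : (x : ℤ) ≤ g := by
  obtain ⟨s, -, hs⟩ := (h x).not_left.1 (natCast_mem_map_iff.not.2 hx)
  have hsg : (s : ℤ) = g - x := hs
  omega

theorem IsSymmetric.frobenius (h : (M.map (Nat.castAddMonoidHom ℤ)).IsSymmetric g) (hg : 0 ≤ g) :
    {x | x ∉ M}.Finite ∧ ∃ f : ℕ, f ∉ M ∧ (∀ x, x ∉ M → x ≤ f) ∧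
      ∀ x : ℤ, (∀ s ∈ M, (s : ℤ) ≠ x) → ∃ s ∈ M, (s : ℤ) = f - x := by
  lift g to ℕ using hg
  have hle (x : ℕ) (hx : x ∉ M) : x ≤ g := by exact_mod_cast h.le_of_notMem hx
  refine ⟨(Set.finite_Iic g).subset hle, g, natCast_mem_map_iff.not.1 h.notMem, hle,
    fun x hx => ?_⟩
  have hx' : x ∉ M.map (Nat.castAddMonoidHom ℤ) := fun ⟨s, hs, hsx⟩ => hx s hs hsx
  simpa using (h x).not_left.1 hx'

theorem isSymmetric_map_natCast_closure_triple {m₁ m₂ a d : ℕ} (hm₂ : 0 < m₂)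
    (hcopm : m₁.Coprime m₂) (ha : 0 < a) (hcop : a.Coprime d) (hd : d ∈ closure {m₁, m₂}) :
    ((closure {a * m₁, a * m₂, d}).map (Nat.castAddMonoidHom ℤ)).IsSymmetric
      (a * (m₁ * m₂ - m₁ - m₂) + (a - 1) * d) := by
  have hd' : (d : ℤ) ∈ closure {(m₁ : ℤ), (m₂ : ℤ)} := by
    simpa [AddMonoidHom.map_mclosure, Set.image_insert_eq] using
      mem_map_of_mem (Nat.castAddMonoidHom ℤ) hd
  have h := isSymmetric_closure_triple (by omega) (by omega) (Nat.isCoprime_iff_coprime.2 hcopm)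
    (by omega) (Nat.isCoprime_iff_coprime.2 hcop) hd'
  simpa [AddMonoidHom.map_mclosure, Set.image_insert_eq] using h

end Nat

theorem mul_notMem_closure_pair {m₁ m₂ a b c : ℕ} (hm₂ : 1 < m₂) (hcopm : m₁.Coprime m₂)
    (ha : 0 < a) (hbc : 2 ≤ b + c) (hcop : a.Coprime (b * m₁ + c * m₂)) :
    a * m₁ ∉ closure {a * m₂, b * m₁ + c * m₂} := by
  rw [mem_closure_pair]
  rintro ⟨β, γ, h⟩
  simp only [smul_eq_mul] at h
  have hγ : a ∣ γ * (b * m₁ + c * m₂) :=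
    (Nat.dvd_add_right ⟨β * m₂, by ring⟩).1 (h ▸ dvd_mul_right a m₁)
  obtain ⟨k, rfl⟩ := hcop.dvd_of_dvd_mul_right hγ
  have heq : m₁ = β * m₂ + k * b * m₁ + k * c * m₂ :=
    Nat.eq_of_mul_eq_mul_left ha (by rw [← h]; ring)
  have hndvd : ¬ m₂ ∣ m₁ := fun hd => by
    have := Nat.Coprime.eq_one_of_dvd hcopm.symm hd
    omega
  obtain hkb | hkb := Nat.eq_zero_or_pos (k * b)
  · exact hndvd ⟨β + k * c, by rw [heq, hkb]; ring⟩
  · have hm₁ : 0 < m₁ := Nat.pos_of_ne_zero fun h0 => hndvd (h0 ▸ dvd_zero m₂)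
    have hkb1 : k * b = 1 := by
      by_contra hne
      have : 2 * m₁ ≤ k * b * m₁ := Nat.mul_le_mul_right _ (by omega)
      omega
    obtain ⟨rfl, rfl⟩ := mul_eq_one.1 hkb1
    nlinarith

theorem notMem_closure_mul_pair {a d : ℕ} (m₁ m₂ : ℕ) (ha : a ≠ 1) (hcop : a.Coprime d) :
    d ∉ closure {a * m₁, a * m₂} := by
  rw [mem_closure_pair]
  rintro ⟨β, γ, h⟩
  exact ha (hcop.eq_one_of_dvd ⟨β * m₁ + γ * m₂, by rw [← h, smul_eq_mul, smul_eq_mul]; ring⟩)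

section Triple

variable {M : Type*} [AddMonoid M] {A B C : M}

theorem ncard_triple_of_notMem_closure (hA : A ∉ closure {B, C}) (hB : B ∉ closure {A, C}) :
    ({A, B, C} : Set M).ncard = 3 := by
  have hAB : A ≠ B := fun h => hA (h ▸ subset_closure (by simp))
  have hAC : A ≠ C := fun h => hA (h ▸ subset_closure (by simp))
  have hBC : B ≠ C := fun h => hB (h ▸ subset_closure (by simp))
  exact Set.ncard_eq_three.2 ⟨A, B, C, hAB, hAC, hBC, rfl⟩

theorem notMem_closure_diff_of_triple (hA : A ∉ closure {B, C}) (hB : B ∉ closure {A, C})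
    (hC : C ∉ closure {A, B}) :
    ∀ x ∈ ({A, B, C} : Set M), x ∉ closure (({A, B, C} : Set M) \ {x}) := by
  have key {x : M} {s : Set M} (hxs : ({A, B, C} : Set M) ⊆ insert x s) (hx : x ∉ closure s) :
      x ∉ closure (({A, B, C} : Set M) \ {x}) :=
    fun h => hx (closure_mono (Set.sdiff_singleton_subset_iff.2 hxs) h)
  rintro x (rfl | rfl | rfl)
  · exact key subset_rfl hA
  · exact key (by rw [Set.insert_comm]) hB
  · exact key (fun y => by simp only [Set.mem_insert_iff, Set.mem_singleton_iff]; tauto) hC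

end Triple
end AddSubmonoid

/-- For coprime `m₁, m₂ > 1` and `a ≥ 2`, `b + c ≥ 2`, `gcd(a, b m₁ + c m₂) = 1`, the monoid
`S = ⟨a m₁, a m₂, b m₁ + c m₂⟩` is a symmetric numerical semigroup of embedding dimension 3. -/
theorem stmt11 (m₁ m₂ a b c : ℕ) (hm₁ : 1 < m₁) (hm₂ : 1 < m₂)
    (hcopm : Nat.Coprime m₁ m₂) (ha : 2 ≤ a) (hbc : 2 ≤ b + c)
    (hcop : Nat.Coprime a (b * m₁ + c * m₂)) :
    -- S is a numerical semigroup: cofinite in ℕ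
    {x : ℕ | x ∉ AddSubmonoid.closure ({a * m₁, a * m₂, b * m₁ + c * m₂} : Set ℕ)}.Finite ∧
    -- S is symmetric: for f the Frobenius number, x ∉ S implies f - x ∈ S
    (∃ f : ℕ, f ∉ AddSubmonoid.closure ({a * m₁, a * m₂, b * m₁ + c * m₂} : Set ℕ) ∧
      (∀ x : ℕ, x ∉ AddSubmonoid.closure ({a * m₁, a * m₂, b * m₁ + c * m₂} : Set ℕ) → x ≤ f) ∧
      (∀ x : ℤ, (∀ s ∈ AddSubmonoid.closure ({a * m₁, a * m₂, b * m₁ + c * m₂} : Set ℕ),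
          (s : ℤ) ≠ x) →
        ∃ s ∈ AddSubmonoid.closure ({a * m₁, a * m₂, b * m₁ + c * m₂} : Set ℕ),
          (s : ℤ) = (f : ℤ) - x)) ∧
    -- S has embedding dimension three: its minimal generating set has three elements
    ({a * m₁, a * m₂, b * m₁ + c * m₂} : Set ℕ).ncard = 3 ∧
    (∀ x ∈ ({a * m₁, a * m₂, b * m₁ + c * m₂} : Set ℕ),
      x ∉ AddSubmonoid.closure (({a * m₁, a * m₂, b * m₁ + c * m₂} : Set ℕ) \ {x})) := by
  have hF : (0 : ℤ) ≤ a * (m₁ * m₂ - m₁ - m₂) + (a - 1) * (b * m₁ + c * m₂) := by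
    have : (0 : ℤ) ≤ m₁ * m₂ - m₁ - m₂ := by nlinarith [(by exact_mod_cast hm₁ : (1 : ℤ) < m₁),
      (by exact_mod_cast hm₂ : (1 : ℤ) < m₂)]
    exact add_nonneg (mul_nonneg (by positivity) this) (mul_nonneg (by omega) (by positivity))
  have hd : b * m₁ + c * m₂ ∈ AddSubmonoid.closure {m₁, m₂} :=
    (AddSubmonoid.mem_closure_pair _ _ _).2 ⟨b, c, by simp⟩
  have hsym :=
    AddSubmonoid.isSymmetric_map_natCast_closure_triple (by omega) hcopm (by omega) hcop hd
  obtain ⟨hfinite, hfrobenius⟩ := hsym.frobenius (by exact_mod_cast hF)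
  have hA := AddSubmonoid.mul_notMem_closure_pair hm₂ hcopm (by omega) hbc hcop
  have hB : a * m₂ ∉ AddSubmonoid.closure {a * m₁, b * m₁ + c * m₂} := by
    have h := AddSubmonoid.mul_notMem_closure_pair (a := a) (b := c) (c := b) hm₁ hcopm.symm
      (by omega) (by omega) (by rwa [add_comm])
    rwa [add_comm] at h
  have hC := AddSubmonoid.notMem_closure_mul_pair m₁ m₂ (by omega) hcop
  exact ⟨hfinite, hfrobenius, AddSubmonoid.ncard_triple_of_notMem_closure hA hB,
    AddSubmonoid.notMem_closure_diff_of_triple hA hB hC⟩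
end

section
/- With m_1, m_2 coprime and greater than one, a ≥ 2, b + c ≥ 2, gcd(a, b m_1 + c m_2) = 1, and S = ⟨a m_1, a m_2, b m_1 + c m_2⟩: a(b m_1 + c m_2) - a m_1 m_2 ∈ S if and only if b ≥ m_2 or c ≥ m_1. -/
/-! Write `d = b m₁ + c m₂`, so `S = a⟨m₁, m₂⟩ + ℕd`. In a representation of `a(d - m₁m₂)` in `S`
the coefficient of `d` is divisible by `a`, as `gcd(a, d) = 1`, and is less than `a`, so it
vanishes: `a(d - m₁m₂) ∈ S` iff `d - m₁m₂ = p m₁ + q m₂` for some `p, q ≥ 0`. If `b < m₂` and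
`c < m₁`, reducing such an identity modulo `m₂` and `m₁` forces `p ≥ b` and `q ≥ c`, which is
impossible; conversely `b ≥ m₂` or `c ≥ m₁` gives the representation directly. -/

theorem AddSubmonoid.mem_closure_triple {A : Type*} [AddCommMonoid A] {x y z s : A} :
    s ∈ closure ({x, y, z} : Set A) ↔ ∃ p q r : ℕ, p • x + q • y + r • z = s := by
  rw [← Set.singleton_union, closure_union, mem_sup]
  simp_rw [mem_closure_singleton, mem_closure_pair]
  constructor
  · rintro ⟨_, ⟨p, rfl⟩, _, ⟨q, r, rfl⟩, rfl⟩
    exact ⟨p, q, r, add_assoc _ _ _⟩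
  · rintro ⟨p, q, r, rfl⟩
    exact ⟨_, ⟨p, rfl⟩, _, ⟨q, r, rfl⟩, (add_assoc _ _ _).symm⟩

theorem le_of_mul_add_mul_eq_of_lt {m n p q b c : ℕ} (hmn : m.Coprime n) (hb : b < n)
    (h : p * m + q * n = b * m + c * n) : b ≤ p := by
  have hmod : p * m ≡ b * m [MOD n] := by
    unfold Nat.ModEq
    simpa only [Nat.add_mul_mod_self_right] using congrArg (· % n) h
  have hpb : p % n = b := Eq.trans (hmod.cancel_right_of_coprime hmn.symm) (Nat.mod_eq_of_lt hb)
  exact hpb ▸ Nat.mod_le p n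

theorem le_or_le_of_add_mul_eq {m₁ m₂ p q b c : ℕ} (hcop : m₁.Coprime m₂)
    (h : p * m₁ + q * m₂ + m₁ * m₂ = b * m₁ + c * m₂) : m₂ ≤ b ∨ m₁ ≤ c := by
  by_contra! ⟨hb, hc⟩
  have hbp : b ≤ p := le_of_mul_add_mul_eq_of_lt (q := q + m₁) (c := c) hcop hb (by linarith)
  have hcq : c ≤ q := le_of_mul_add_mul_eq_of_lt (q := p + m₂) (c := b) hcop.symm hc (by linarith)
  have : 0 < m₁ * m₂ := Nat.mul_pos (by omega) (by omega)
  nlinarith [Nat.mul_le_mul_right m₁ hbp, Nat.mul_le_mul_right m₂ hcq]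

theorem add_eq_of_mul_add_mul_add_mul_eq {a d k y r : ℕ} (hcop : a.Coprime d) (ha : 0 < a)
    (hk : 0 < k) (h : a * y + r * d + a * k = a * d) : y + k = d := by
  have hrd : a ∣ r * d := by
    have : a ∣ a * y + r * d + a * k := h ▸ dvd_mul_right a d
    rwa [Nat.dvd_add_left (dvd_mul_right a k), Nat.dvd_add_right (dvd_mul_right a y)] at this
  obtain ⟨j, rfl⟩ := hcop.dvd_of_dvd_mul_right hrd
  have hcancel : y + j * d + k = d := Nat.eq_of_mul_eq_mul_left ha (by rw [← h]; ring)
  rcases j with _ | j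
  · simpa using hcancel
  · nlinarith

theorem stmt13_general (m₁ m₂ a b c : ℕ) (hm₁ : 1 < m₁) (hm₂ : 1 < m₂)
    (hcopm : Nat.Coprime m₁ m₂) (ha : 2 ≤ a)
    (hcop : Nat.Coprime a (b * m₁ + c * m₂)) :
    (∃ s ∈ AddSubmonoid.closure ({a * m₁, a * m₂, b * m₁ + c * m₂} : Set ℕ),
        (s : ℤ) = (a : ℤ) * ((b : ℤ) * m₁ + (c : ℤ) * m₂) - (a : ℤ) * m₁ * m₂) ↔
      (m₂ ≤ b ∨ m₁ ≤ c) := by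
  simp_rw [AddSubmonoid.mem_closure_triple, smul_eq_mul]
  constructor
  · rintro ⟨_, ⟨p, q, r, rfl⟩, hs⟩
    have hnat : a * (p * m₁ + q * m₂) + r * (b * m₁ + c * m₂) + a * (m₁ * m₂)
        = a * (b * m₁ + c * m₂) := by
      zify; push_cast at hs
      linear_combination hs
    exact le_or_le_of_add_mul_eq hcopm <|
      add_eq_of_mul_add_mul_add_mul_eq hcop (by omega) (Nat.mul_pos (by omega) (by omega)) hnat
  · rintro (hb | hc)
    · refine ⟨_, ⟨b - m₂, c, 0, rfl⟩, ?_⟩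
      push_cast [Nat.cast_sub hb]; ring
    · refine ⟨_, ⟨b, c - m₁, 0, rfl⟩, ?_⟩
      push_cast [Nat.cast_sub hc]; ring

/-- With `m₁, m₂` coprime and `> 1`, `a ≥ 2`, `b + c ≥ 2`, `gcd(a, b m₁ + c m₂) = 1` and
`S = ⟨a m₁, a m₂, b m₁ + c m₂⟩`: `a(b m₁ + c m₂) - a m₁ m₂ ∈ S` iff `b ≥ m₂` or `c ≥ m₁`. -/
theorem stmt13 (m₁ m₂ a b c : ℕ) (hm₁ : 1 < m₁) (hm₂ : 1 < m₂)
    (hcopm : Nat.Coprime m₁ m₂) (ha : 2 ≤ a) (hbc : 2 ≤ b + c)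
    (hcop : Nat.Coprime a (b * m₁ + c * m₂)) :
    (∃ s ∈ AddSubmonoid.closure ({a * m₁, a * m₂, b * m₁ + c * m₂} : Set ℕ),
        (s : ℤ) = (a : ℤ) * ((b : ℤ) * m₁ + (c : ℤ) * m₂) - (a : ℤ) * m₁ * m₂) ↔
      (m₂ ≤ b ∨ m₁ ≤ c) :=
  stmt13_general m₁ m₂ a b c hm₁ hm₂ hcopm ha hcop
end
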